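/- arXiv:1802.08170 — 2 statements merged into one kernel-verified Lean document; each statement's English description precedes it below -/
import Mathlib

section
/- A T0 topological space is a sober C-space if and only if it is the Scott space of a (unique) continuous dcpo. -/
variable {X : Type*} [TopologicalSpace X]

/-- The specialization preorder: x ≤ y iff every open set containing x contains y. -/
def sle (x y : X) : Prop := ∀ U : Set X, IsOpen U → x ∈ U → y ∈ U

/-- The core of a point. -/
def core (x : X) : Set X := {y | sle x y}

/-- Directed set w.r.t. the specialization preorder. -/
def dirUp (D : Set X) : Prop :=
  D.Nonempty ∧ ∀ a ∈ D, ∀ b ∈ D, ∃ c ∈ D, sle a c ∧ sle b c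

/-- Least upper bound w.r.t. the specialization preorder. -/
def lub (D : Set X) (y : X) : Prop :=
  (∀ d ∈ D, sle d y) ∧ ∀ z, (∀ d ∈ D, sle d z) → sle y z

/-- The way-below relation of the specialization preorder. -/
def wb (x y : X) : Prop :=
  ∀ D : Set X, dirUp D → ∀ s, lub D s → sle y s → ∃ d ∈ D, sle x d

/-!
The closure of a directed set `D` of a sober space is irreducible, and its generic point is the
supremum of `D`; so the specialization order is a dcpo, and the supremum of `D` lies in the closure
of `D`, which makes every open set Scott open. In a C-space the points `u` with `x ∈ int ↑u` form a
directed set with supremum `x`; each of them is way below `x` because `int ↑u` is Scott open. This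
gives continuity, and shows that a Scott-open set is a neighbourhood of each of its points.

Conversely, in a continuous dcpo interpolation makes every `↟u = {y | u ≪ y}` Scott open, which
gives the C-space property. If `C` is closed and irreducible, the points way below some point of `C`
form a directed set (two of the open sets `↟u` meeting `C` meet inside `C`), and its supremum is
the generic point of `C`.
-/

open Topology

def IsScottOpen (U : Set X) : Prop :=
  (∀ x ∈ U, ∀ y, sle x y → y ∈ U) ∧
    ∀ D : Set X, dirUp D → ∀ y, lub D y → y ∈ U → (D ∩ U).Nonempty

section

variable (X)

def IsCSpace : Prop :=
  ∀ (x : X) (U : Set X), IsOpen U → x ∈ U → ∃ u : X, x ∈ interior (core u) ∧ core u ⊆ U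

def IsDirectedComplete : Prop := ∀ D : Set X, dirUp D → ∃ y, lub D y

def IsContinuousOrder : Prop := ∀ y : X, dirUp {x | wb x y} ∧ lub {x | wb x y} y

def IsScottTopology : Prop := ∀ U : Set X, IsOpen U ↔ IsScottOpen U

end

theorem sle_iff_specializes {x y : X} : sle x y ↔ y ⤳ x :=
  specializes_iff_forall_open.symm

theorem sle_iff_mem_closure_singleton {x y : X} : sle x y ↔ x ∈ closure {y} :=
  sle_iff_specializes.trans specializes_iff_mem_closure

theorem sle_refl (x : X) : sle x x := fun _ _ h => h

theorem sle_trans {x y z : X} (hxy : sle x y) (hyz : sle y z) : sle x z :=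
  fun U hU hx => hyz U hU (hxy U hU hx)

theorem sle_antisymm [T0Space X] {x y : X} (hxy : sle x y) (hyx : sle y x) : x = y :=
  ((sle_iff_specializes.1 hyx).antisymm (sle_iff_specializes.1 hxy)).eq

theorem IsClosed.mem_of_sle {C : Set X} (hC : IsClosed C) {x y : X} (hxy : sle x y)
    (hy : y ∈ C) : x ∈ C :=
  not_not.1 fun hx => hxy Cᶜ hC.isOpen_compl hx hy

theorem lub_unique [T0Space X] {D : Set X} {x y : X} (hx : lub D x) (hy : lub D y) : x = y :=
  sle_antisymm (hx.2 y hy.1) (hy.2 x hx.1)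

theorem dirUp_singleton (x : X) : dirUp {x} :=
  ⟨Set.singleton_nonempty x, fun _ ha _ hb => ⟨x, rfl, ha ▸ sle_refl x, hb ▸ sle_refl x⟩⟩

theorem lub_singleton (x : X) : lub {x} x :=
  ⟨fun _ hd => hd ▸ sle_refl x, fun _ hz => hz x rfl⟩

theorem sle_of_wb {x y : X} (h : wb x y) : sle x y := by
  obtain ⟨d, rfl, hxd⟩ := h {y} (dirUp_singleton y) y (lub_singleton y) (sle_refl y)
  exact hxd

theorem wb_of_sle_of_wb {x u y : X} (hxu : sle x u) (h : wb u y) : wb x y := fun D hD s hs hys =>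
  let ⟨d, hdD, hud⟩ := h D hD s hs hys
  ⟨d, hdD, sle_trans hxu hud⟩

theorem wb_of_wb_of_sle {x y y' : X} (h : wb x y) (hyy' : sle y y') : wb x y' :=
  fun D hD s hs hy's => h D hD s hs (sle_trans hyy' hy's)

theorem dirUp_lub_of_cofinal {B W : Set X} {y : X} (hB : dirUp B) (hBy : lub B y) (hBW : B ⊆ W)
    (hWB : ∀ w ∈ W, ∃ b ∈ B, sle w b) : dirUp W ∧ lub W y := by
  refine ⟨⟨hB.1.mono hBW, fun a ha b hb => ?_⟩, fun w hw => ?_,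
    fun z hz => hBy.2 z fun b hb => hz b (hBW hb)⟩
  · obtain ⟨a', ha'B, haa'⟩ := hWB a ha
    obtain ⟨b', hb'B, hbb'⟩ := hWB b hb
    obtain ⟨c, hcB, ha'c, hb'c⟩ := hB.2 a' ha'B b' hb'B
    exact ⟨c, hBW hcB, sle_trans haa' ha'c, sle_trans hbb' hb'c⟩
  · obtain ⟨b, hbB, hwb⟩ := hWB w hw
    exact sle_trans hwb (hBy.1 b hbB)

section Sober

theorem dirUp.isIrreducible {D : Set X} (hD : dirUp D) : IsIrreducible D :=
  ⟨hD.1, fun U V hU hV ⟨a, haD, haU⟩ ⟨b, hbD, hbV⟩ =>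
    let ⟨c, hcD, hac, hbc⟩ := hD.2 a haD b hbD
    ⟨c, hcD, hac U hU haU, hbc V hV hbV⟩⟩

theorem quasiSober_iff_exists_unique_closure_singleton [T0Space X] :
    QuasiSober X ↔ ∀ C : Set X, IsClosed C → C.Nonempty →
      (∀ A B : Set X, IsClosed A → IsClosed B → C ⊆ A ∪ B → C ⊆ A ∨ C ⊆ B) →
      ∃! x : X, C = closure {x} := by
  rw [quasiSober_iff]
  refine ⟨fun h C hC hne hirr => ?_, fun h C hirr hC => ?_⟩
  · obtain ⟨x, hx⟩ := h ⟨hne, isPreirreducible_iff_isClosed_union_isClosed.2 hirr⟩ hC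
    exact ⟨x, hx.symm, fun y hy => IsGenericPoint.eq (show IsGenericPoint y C from hy.symm) hx⟩
  · obtain ⟨x, hx, -⟩ := h C hC hirr.1 (isPreirreducible_iff_isClosed_union_isClosed.1 hirr.2)
    exact ⟨x, hx.symm⟩

theorem IsGenericPoint.lub_of_closure {D : Set X} {x : X} (hx : IsGenericPoint x (closure D)) :
    lub D x := by
  refine ⟨fun d hd => sle_iff_specializes.2 (hx.specializes (subset_closure hd)), fun z hz => ?_⟩
  have hDz : closure D ⊆ closure {z} :=
    closure_minimal (fun d hd => sle_iff_mem_closure_singleton.1 (hz d hd)) isClosed_closure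
  exact sle_iff_mem_closure_singleton.2 (hDz hx.mem)

variable [QuasiSober X]

theorem exists_lub_mem_closure {D : Set X} (hD : dirUp D) : ∃ x, lub D x ∧ x ∈ closure D :=
  let hx := hD.isIrreducible.closure.isGenericPoint_genericPoint isClosed_closure
  ⟨_, hx.lub_of_closure, hx.mem⟩

theorem isDirectedComplete_of_quasiSober : IsDirectedComplete X := fun _ hD =>
  (exists_lub_mem_closure hD).imp fun _ => And.left

variable [T0Space X]

theorem lub_mem_closure {D : Set X} (hD : dirUp D) {y : X} (hy : lub D y) : y ∈ closure D := by
  obtain ⟨x, hx, hxD⟩ := exists_lub_mem_closure hD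
  exact lub_unique hx hy ▸ hxD

theorem IsOpen.isScottOpen {U : Set X} (hU : IsOpen U) : IsScottOpen U := by
  refine ⟨fun x hx y hxy => hxy U hU hx, fun D hD y hy hyU => ?_⟩
  obtain ⟨d, hdU, hdD⟩ := mem_closure_iff.1 (lub_mem_closure hD hy) U hU hyU
  exact ⟨d, hdD, hdU⟩

theorem wb_of_mem_interior_core {u y : X} (hy : y ∈ interior (core u)) : wb u y :=
  fun D hD s hs hys =>
    let ⟨d, hdD, hd⟩ := isOpen_interior.isScottOpen.2 D hD s hs (hys _ isOpen_interior hy)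
    ⟨d, hdD, interior_subset hd⟩

end Sober

theorem IsCSpace.dirUp_lub_interior_core (hC : IsCSpace X) (x : X) :
    dirUp {u : X | x ∈ interior (core u)} ∧ lub {u : X | x ∈ interior (core u)} x := by
  refine ⟨⟨?_, fun a ha b hb => ?_⟩, fun u hu => interior_subset hu, fun z hz U hU hx => ?_⟩
  · obtain ⟨u, hu, -⟩ := hC x Set.univ isOpen_univ trivial
    exact ⟨u, hu⟩
  · obtain ⟨c, hc, hcab⟩ := hC x _ (isOpen_interior.inter isOpen_interior) ⟨ha, hb⟩
    obtain ⟨hca, hcb⟩ := hcab (sle_refl c)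
    exact ⟨c, hc, interior_subset hca, interior_subset hcb⟩
  · obtain ⟨u, hu, huU⟩ := hC x U hU hx
    exact huU (hz u hu)

theorem IsScottOpen.isOpen (hC : IsCSpace X) {U : Set X} (hU : IsScottOpen U) : IsOpen U := by
  refine isOpen_iff_forall_mem_open.2 fun x hx => ?_
  obtain ⟨hdir, hlub⟩ := hC.dirUp_lub_interior_core x
  obtain ⟨u, hux, huU⟩ := hU.2 _ hdir x hlub hx
  exact ⟨interior (core u), fun y hy => hU.1 u huU y (interior_subset hy), isOpen_interior, hux⟩

theorem IsCSpace.isContinuousOrder [QuasiSober X] [T0Space X] (hC : IsCSpace X) :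
    IsContinuousOrder X := fun y =>
  let ⟨hdir, hlub⟩ := hC.dirUp_lub_interior_core y
  dirUp_lub_of_cofinal hdir hlub (fun _ => wb_of_mem_interior_core)
    fun _ hx => hx _ hdir y hlub (sle_refl y)

theorem IsCSpace.isScottTopology [QuasiSober X] [T0Space X] (hC : IsCSpace X) :
    IsScottTopology X := fun _ => ⟨IsOpen.isScottOpen, IsScottOpen.isOpen hC⟩

namespace IsContinuousOrder

theorem dirUp_lub_interpolants (hcont : IsContinuousOrder X) (y : X) :
    dirUp {z : X | ∃ w, wb z w ∧ wb w y} ∧ lub {z : X | ∃ w, wb z w ∧ wb w y} y := by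
  refine ⟨⟨?_, ?_⟩, ?_, fun s hs => ?_⟩
  · obtain ⟨w, hw⟩ := (hcont y).1.1
    obtain ⟨z, hz⟩ := (hcont w).1.1
    exact ⟨z, w, hz, hw⟩
  · rintro z₁ ⟨w₁, hz₁, hw₁⟩ z₂ ⟨w₂, hz₂, hw₂⟩
    obtain ⟨w, hw, hw₁w, hw₂w⟩ := (hcont y).1.2 w₁ hw₁ w₂ hw₂
    obtain ⟨d, hd, hz₁d, hz₂d⟩ :=
      (hcont w).1.2 z₁ (wb_of_wb_of_sle hz₁ hw₁w) z₂ (wb_of_wb_of_sle hz₂ hw₂w)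
    exact ⟨d, ⟨w, hd, hw⟩, hz₁d, hz₂d⟩
  · rintro z ⟨w, hzw, hwy⟩
    exact sle_trans (sle_of_wb hzw) (sle_of_wb hwy)
  · exact (hcont y).2.2 s fun w hw => (hcont w).2.2 s fun z hz => hs z ⟨w, hz, hw⟩

theorem exists_wb_wb_of_wb (hcont : IsContinuousOrder X) {u y : X} (h : wb u y) :
    ∃ w, wb u w ∧ wb w y := by
  obtain ⟨hdir, hlub⟩ := hcont.dirUp_lub_interpolants y
  obtain ⟨z, ⟨w, hzw, hwy⟩, huz⟩ := h _ hdir y hlub (sle_refl y)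
  exact ⟨w, wb_of_sle_of_wb huz hzw, hwy⟩

theorem isOpen_setOf_wb (hcont : IsContinuousOrder X) (hscott : IsScottTopology X) (u : X) :
    IsOpen {y | wb u y} := by
  refine (hscott _).2 ⟨fun y hy y' hyy' => wb_of_wb_of_sle hy hyy', fun D hD y hy huy => ?_⟩
  obtain ⟨w, huw, hwy⟩ := hcont.exists_wb_wb_of_wb huy
  obtain ⟨d, hdD, hwd⟩ := hwy D hD y hy (sle_refl y)
  exact ⟨d, hdD, wb_of_wb_of_sle huw hwd⟩

theorem isCSpace (hcont : IsContinuousOrder X) (hscott : IsScottTopology X) : IsCSpace X := by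
  intro x U hU hx
  have hUscott := (hscott U).1 hU
  obtain ⟨u, hux, huU⟩ := hUscott.2 _ (hcont x).1 x (hcont x).2 hx
  exact ⟨u, interior_maximal (fun _ => sle_of_wb) (hcont.isOpen_setOf_wb hscott u) hux,
    fun y hy => hUscott.1 u huU y hy⟩

theorem dirUp_setOf_exists_wb_of_isIrreducible (hcont : IsContinuousOrder X)
    (hscott : IsScottTopology X) {S : Set X} (hS : IsIrreducible S) :
    dirUp {u | ∃ c ∈ S, wb u c} := by
  refine ⟨?_, ?_⟩
  · obtain ⟨c, hc⟩ := hS.nonempty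
    obtain ⟨u, hu⟩ := (hcont c).1.1
    exact ⟨u, c, hc, hu⟩
  · rintro u₁ ⟨c₁, hc₁, hu₁⟩ u₂ ⟨c₂, hc₂, hu₂⟩
    obtain ⟨c, hc, hu₁c, hu₂c⟩ := hS.2 _ _ (hcont.isOpen_setOf_wb hscott u₁)
      (hcont.isOpen_setOf_wb hscott u₂) ⟨c₁, hc₁, hu₁⟩ ⟨c₂, hc₂, hu₂⟩
    obtain ⟨w, hw, hu₁w, hu₂w⟩ := (hcont c).1.2 u₁ hu₁c u₂ hu₂c
    exact ⟨w, ⟨c, hc, hw⟩, hu₁w, hu₂w⟩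

end IsContinuousOrder

theorem IsClosed.lub_mem (hscott : IsScottTopology X) {S : Set X} (hS : IsClosed S) {D : Set X}
    (hD : dirUp D) (hDS : D ⊆ S) {y : X} (hy : lub D y) : y ∈ S := by
  by_contra hyS
  obtain ⟨d, hdD, hdS⟩ := ((hscott Sᶜ).1 hS.isOpen_compl).2 D hD y hy hyS
  exact hdS (hDS hdD)

theorem IsDirectedComplete.quasiSober (hdc : IsDirectedComplete X) (hcont : IsContinuousOrder X)
    (hscott : IsScottTopology X) : QuasiSober X := by
  refine ⟨fun {S} hS hSc => ?_⟩
  have hD := hcont.dirUp_setOf_exists_wb_of_isIrreducible hscott hS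
  obtain ⟨x, hx⟩ := hdc _ hD
  have hxS : x ∈ S :=
    hSc.lub_mem hscott hD (fun u ⟨c, hc, huc⟩ => hSc.mem_of_sle (sle_of_wb huc) hc) hx
  have hSx : ∀ c ∈ S, sle c x := fun c hc => (hcont c).2.2 x fun u hu => hx.1 u ⟨c, hc, hu⟩
  refine ⟨x, isGenericPoint_iff_specializes.2 fun y => ⟨fun hxy => ?_, fun hy => ?_⟩⟩
  · exact hSc.mem_of_sle (sle_iff_specializes.2 hxy) hxS
  · exact sle_iff_specializes.1 (hSx y hy)

/-- A T0 space is a sober C-space iff it is the Scott space of a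
continuous dcpo, i.e. its specialization order is a continuous dcpo whose Scott
topology is the given topology. -/
theorem stmt_14 [T0Space X] :
    ((∀ C : Set X, IsClosed C → C.Nonempty →
        (∀ A B : Set X, IsClosed A → IsClosed B → C ⊆ A ∪ B → C ⊆ A ∨ C ⊆ B) →
        ∃! x : X, C = closure {x}) ∧
     (∀ (x : X) (U : Set X), IsOpen U → x ∈ U →
        ∃ u : X, x ∈ interior (core u) ∧ core u ⊆ U)) ↔
    ((∀ D : Set X, dirUp D → ∃ y, lub D y) ∧
     (∀ y : X, dirUp {x | wb x y} ∧ lub {x | wb x y} y) ∧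
     (∀ U : Set X, IsOpen U ↔
        ((∀ x ∈ U, ∀ y, sle x y → y ∈ U) ∧
         ∀ D : Set X, dirUp D → ∀ y, lub D y → y ∈ U → (D ∩ U).Nonempty))) := by
  rw [← quasiSober_iff_exists_unique_closure_singleton]
  refine ⟨fun ⟨_, hC⟩ => ?_, fun ⟨hdc, hcont, hscott⟩ => ?_⟩
  · exact ⟨isDirectedComplete_of_quasiSober, IsCSpace.isContinuousOrder hC,
      IsCSpace.isScottTopology hC⟩
  · exact ⟨IsDirectedComplete.quasiSober hdc hcont hscott, IsContinuousOrder.isCSpace hcont hscott⟩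
end

section
/- Let T = (X, ≤, T) be a semi-qospace (principal ideals and principal filters are closed). Then T is C-stable if and only if T is ↑-stable and the upper space (X, T^≤) is a C-space, where T^≤ is the topology of open upper sets. -/
/-- The upper space topology: open upper sets of an ordered topological space. -/
def upperTop (X : Type*) [Preorder X] [TopologicalSpace X] : TopologicalSpace X where
  IsOpen U := IsOpen U ∧ ∀ a ∈ U, ∀ b, a ≤ b → b ∈ U
  isOpen_univ := ⟨isOpen_univ, fun _ _ _ _ => trivial⟩
  isOpen_inter := fun U V hU hV =>
    ⟨hU.1.inter hV.1, fun a ha b hb => ⟨hU.2 a ha.1 b hb, hV.2 a ha.2 b hb⟩⟩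
  isOpen_sUnion := fun S hS =>
    ⟨isOpen_sUnion fun U hU => (hS U hU).1, fun a ha b hb => by
      obtain ⟨U, hU, haU⟩ := ha
      exact ⟨U, hU, (hS U hU).2 a haU b hb⟩⟩

/-- Core of a point w.r.t. a topology. -/
def coreT {X : Type*} (t : TopologicalSpace X) (u : X) : Set X :=
  {y | ∀ O : Set X, t.IsOpen O → u ∈ O → y ∈ O}

/-- C-space condition for a topology: every point has a neighborhood base of cores. -/
def IsCSpaceT {X : Type*} (t : TopologicalSpace X) : Prop :=
  ∀ (x : X) (U : Set X), t.IsOpen U → x ∈ U →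
    ∃ (u : X) (V : Set X), t.IsOpen V ∧ x ∈ V ∧ V ⊆ coreT t u ∧ coreT t u ⊆ U

/-!
In the upper topology every open set is an upper set, and when principal ideals are closed the
complement of `↓y` is an open upper set; hence the core of `u` in the upper space is exactly `↑u`.
With this identification both conditions say the same thing: every point of an open upper set `U`
lies in the interior of some `↑u` with `u ∈ U`. C-stability supplies such `u` directly (and makes
`↑O` a union of open sets), while conversely a core neighbourhood `V ⊆ ↑u'` inside `↑O` is
`T`-open, so it lies in the interior of `↑x` for any `x ∈ O` below `u'`.
-/

section

open Set

variable {X : Type*} [Preorder X] [TopologicalSpace X]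

def UpStable (X : Type*) [Preorder X] [TopologicalSpace X] : Prop :=
  ∀ O : Set X, IsOpen O → IsOpen {y | ∃ x ∈ O, x ≤ y}

def CStable (X : Type*) [Preorder X] [TopologicalSpace X] : Prop :=
  ∀ O : Set X, IsOpen O → {y | ∃ x ∈ O, x ≤ y} = ⋃ u ∈ O, interior {y | u ≤ y}

lemma upperTop_isOpen_iff {U : Set X} : (upperTop X).IsOpen U ↔ IsOpen U ∧ IsUpperSet U :=
  and_congr_right fun _ => ⟨fun h _ _ hab ha => h _ ha _ hab, fun h _ ha _ hab => h hab ha⟩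

lemma upperTop_isOpen_upperClosure (hstab : UpStable X) {O : Set X} (hO : IsOpen O) :
    (upperTop X).IsOpen {y | ∃ x ∈ O, x ≤ y} :=
  upperTop_isOpen_iff.2 ⟨hstab O hO, (upperClosure O).upper⟩

lemma Ici_subset_coreT_upperTop (u : X) : Ici u ⊆ coreT (upperTop X) u :=
  fun _ hy _ hO huO => hO.2 u huO _ hy

lemma coreT_upperTop_subset_Ici (hclosed : ∀ x : X, IsClosed {y | y ≤ x}) (u : X) :
    coreT (upperTop X) u ⊆ Ici u := by
  intro y hy
  by_contra hne
  have hopen : (upperTop X).IsOpen {z | ¬ z ≤ y} :=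
    upperTop_isOpen_iff.2 ⟨(hclosed y).isOpen_compl, fun _ _ hab hb h => hb (hab.trans h)⟩
  exact hy _ hopen hne le_rfl

lemma iUnion_interior_Ici_subset_upperClosure (O : Set X) :
    ⋃ u ∈ O, interior (Ici u) ⊆ {y | ∃ x ∈ O, x ≤ y} := by
  simp only [iUnion_subset_iff]
  exact fun u hu y hy => ⟨u, hu, interior_subset hy⟩

lemma CStable.upStable (hC : CStable X) : UpStable X := fun O hO => by
  rw [hC O hO]
  exact isOpen_biUnion fun _ _ => isOpen_interior

lemma CStable.isCSpaceT_upperTop (hC : CStable X) : IsCSpaceT (upperTop X) := by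
  intro x U hU hxU
  have hx : x ∈ ⋃ u ∈ U, interior {y | u ≤ y} := hC U hU.1 ▸ ⟨x, hxU, le_rfl⟩
  obtain ⟨u, hu, hxu⟩ := mem_iUnion₂.1 hx
  refine ⟨u, {y | ∃ z ∈ interior {y | u ≤ y}, z ≤ y},
    upperTop_isOpen_upperClosure hC.upStable isOpen_interior, ⟨x, hxu, le_rfl⟩, ?_,
    fun y hy => hy U hU hu⟩
  rintro y ⟨z, hz, hzy⟩
  have huz : u ≤ z := interior_subset hz
  exact Ici_subset_coreT_upperTop u (huz.trans hzy)

lemma cStable_of_isCSpaceT_upperTop (hclosed : ∀ x : X, IsClosed {y | y ≤ x})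
    (hstab : UpStable X) (hCsp : IsCSpaceT (upperTop X)) : CStable X := by
  refine fun O hO => Subset.antisymm ?_ (iUnion_interior_Ici_subset_upperClosure O)
  intro y hy
  obtain ⟨u', V, hV, hyV, hVcore, hcore⟩ :=
    hCsp y _ (upperTop_isOpen_upperClosure hstab hO) hy
  obtain ⟨x, hx, hxu'⟩ : ∃ x ∈ O, x ≤ u' := hcore fun _ _ h => h
  have hVx : V ⊆ {z | x ≤ z} := fun z hz =>
    hxu'.trans (coreT_upperTop_subset_Ici hclosed u' (hVcore hz))
  exact mem_biUnion hx (interior_maximal hVx hV.1 hyV)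

end

/-- A semi-qospace is C-stable iff it is ↑-stable and its upper
space is a C-space. -/
theorem stmt_16 {X : Type*} [Preorder X] [TopologicalSpace X]
    (hsemi : ∀ x : X, IsClosed {y | y ≤ x} ∧ IsClosed {y | x ≤ y}) :
    (∀ O : Set X, IsOpen O →
      {y | ∃ x ∈ O, x ≤ y} = ⋃ u ∈ O, interior {y | u ≤ y}) ↔
    ((∀ O : Set X, IsOpen O → IsOpen {y | ∃ x ∈ O, x ≤ y}) ∧
      IsCSpaceT (upperTop X)) :=
  ⟨fun hC => ⟨CStable.upStable hC, CStable.isCSpaceT_upperTop hC⟩,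
    fun ⟨hstab, hCsp⟩ => cStable_of_isCSpaceT_upperTop (fun x => (hsemi x).1) hstab hCsp⟩
end
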